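/- The ordinary (unrestricted) right rule for intuitionistic implication is admissible in G(FOC+J) when the context consists only of purely intuitionistic formulas: if Γ ⊆ Form_J and Γ, A ⇒ B is derivable in G(FOC+J), then Γ ⇒ A →ᵢ B is derivable in G(FOC+J). -/

import Mathlib

/-- Terms: variables (named by naturals) and constant symbols. -/
inductive Tm : Type
| var : ℕ → Tm
| const : ℕ → Tm
deriving DecidableEq

/-- Formulas of the combined language: atoms, ⊥, ∧, ∨, intuitionistic and
classical implication, intuitionistic and classical universal quantifier,
and the existential quantifier. -/
inductive Fm : Type
| atom : ℕ → List Tm → Fm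
| bot : Fm
| and : Fm → Fm → Fm
| or : Fm → Fm → Fm
| impI : Fm → Fm → Fm
| impC : Fm → Fm → Fm
| allI : ℕ → Fm → Fm
| allC : ℕ → Fm → Fm
| ex : ℕ → Fm → Fm
deriving DecidableEq

def Fm.top : Fm := .impI .bot .bot
def Fm.negC (A : Fm) : Fm := .impC A .bot
def Fm.negI (A : Fm) : Fm := .impI A .bot

def Tm.fv : Tm → Set ℕ
| .var x => {x}
| .const _ => ∅

/-- Free variables of a formula. -/
def Fm.fv : Fm → Set ℕ
| .atom _ ts => {x | ∃ t ∈ ts, x ∈ t.fv}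
| .bot => ∅
| .and A B => A.fv ∪ B.fv
| .or A B => A.fv ∪ B.fv
| .impI A B => A.fv ∪ B.fv
| .impC A B => A.fv ∪ B.fv
| .allI x A => A.fv \ {x}
| .allC x A => A.fv \ {x}
| .ex x A => A.fv \ {x}

/-- Bound variables of a formula. -/
def Fm.bv : Fm → Set ℕ
| .atom _ _ => ∅
| .bot => ∅
| .and A B => A.bv ∪ B.bv
| .or A B => A.bv ∪ B.bv
| .impI A B => A.bv ∪ B.bv
| .impC A B => A.bv ∪ B.bv
| .allI x A => insert x A.bv
| .allC x A => insert x A.bv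
| .ex x A => insert x A.bv

/-- All variables (free and bound) of a formula. -/
def Fm.vars : Fm → Set ℕ
| .atom _ ts => {x | ∃ t ∈ ts, x ∈ t.fv}
| .bot => ∅
| .and A B => A.vars ∪ B.vars
| .or A B => A.vars ∪ B.vars
| .impI A B => A.vars ∪ B.vars
| .impC A B => A.vars ∪ B.vars
| .allI x A => insert x A.vars
| .allC x A => insert x A.vars
| .ex x A => insert x A.vars

def Tm.subst (x : ℕ) (u : Tm) : Tm → Tm
| .var y => if y = x then u else .var y
| .const c => .const c

/-- Substitution of term `u` for variable `x` (under the standing assumption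
that bound and free variables are disjoint, this is clash-avoiding). -/
def Fm.subst : Fm → ℕ → Tm → Fm
| .atom P ts, x, u => .atom P (ts.map (Tm.subst x u))
| .bot, _, _ => .bot
| .and A B, x, u => .and (A.subst x u) (B.subst x u)
| .or A B, x, u => .or (A.subst x u) (B.subst x u)
| .impI A B, x, u => .impI (A.subst x u) (B.subst x u)
| .impC A B, x, u => .impC (A.subst x u) (B.subst x u)
| .allI y A, x, u => .allI y (if y = x then A else A.subst x u)
| .allC y A, x, u => .allC y (if y = x then A else A.subst x u)
| .ex y A, x, u => .ex y (if y = x then A else A.subst x u)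

/-- Persistent formulas: atoms, →ᵢ-formulas and ∀ᵢ-formulas. -/
def Fm.Persistent : Fm → Prop
| .atom _ _ => True
| .impI _ _ => True
| .allI _ _ => True
| _ => False

/-- Purely intuitionistic formulas (no →_c, no ∀_c). -/
def Fm.IsJ : Fm → Prop
| .atom _ _ => True
| .bot => True
| .and A B => A.IsJ ∧ B.IsJ
| .or A B => A.IsJ ∧ B.IsJ
| .impI A B => A.IsJ ∧ B.IsJ
| .impC _ _ => False
| .allI _ A => A.IsJ
| .allC _ _ => False
| .ex _ A => A.IsJ

/-- Purely classical formulas (no →ᵢ, no ∀ᵢ). -/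
def Fm.IsC : Fm → Prop
| .atom _ _ => True
| .bot => True
| .and A B => A.IsC ∧ B.IsC
| .or A B => A.IsC ∧ B.IsC
| .impI _ _ => False
| .impC A B => A.IsC ∧ B.IsC
| .allI _ _ => False
| .allC _ A => A.IsC
| .ex _ A => A.IsC

/-- A raw Kripke structure for the combined first-order language. -/
structure KModel (U : Type) where
  W : Type
  R : W → W → Prop
  D : W → Set U
  cI : ℕ → U
  V : ℕ → W → Set (List U)

/-- The conditions making a raw structure an intuitionistic Kripke model:
`R` is a preorder, domains are nonempty, monotone, with nonempty
intersection, constants are rigid (interpreted in every domain), and the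
predicate valuation is monotone (hereditary) along `R`. -/
structure KModel.IsKripke {U : Type} (M : KModel U) : Prop where
  wNonempty : Nonempty M.W
  refl : ∀ w, M.R w w
  trans : ∀ {w v u}, M.R w v → M.R v u → M.R w u
  dNonempty : ∀ w, (M.D w).Nonempty
  dMono : ∀ {w v}, M.R w v → M.D w ⊆ M.D v
  dInter : (⋂ w, M.D w).Nonempty
  cMem : ∀ c w, M.cI c ∈ M.D w
  vMono : ∀ P {w v}, M.R w v → M.V P w ⊆ M.V P v

def Tm.val {U : Type} (M : KModel U) (g : ℕ → U) : Tm → U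
| .var x => g x
| .const c => M.cI c

/-- Satisfaction of a formula at a world under an assignment. -/
def Fm.Sat {U : Type} (M : KModel U) : Fm → M.W → (ℕ → U) → Prop
| .atom P ts, w, g => ts.map (Tm.val M g) ∈ M.V P w
| .bot, _, _ => False
| .and A B, w, g => A.Sat M w g ∧ B.Sat M w g
| .or A B, w, g => A.Sat M w g ∨ B.Sat M w g
| .impI A B, w, g => ∀ v, M.R w v → A.Sat M v g → B.Sat M v g
| .impC A B, w, g => A.Sat M w g → B.Sat M w g
| .allI x A, w, g => ∀ v, M.R w v → ∀ d ∈ M.D v, A.Sat M v (Function.update g x d)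
| .allC x A, w, g => ∀ d ∈ M.D w, A.Sat M w (Function.update g x d)
| .ex x A, w, g => ∃ d ∈ M.D w, A.Sat M w (Function.update g x d)

/-- Multi-succedent semantic consequence: at every world of every Kripke
model, under any assignment into the domain, if all of `Γ` holds then some
member of `Δ` holds. -/
def Conseq (Γ Δ : List Fm) : Prop :=
  ∀ (U : Type) (M : KModel U), M.IsKripke → ∀ (w : M.W) (g : ℕ → U),
    (∀ x, g x ∈ M.D w) → (∀ A ∈ Γ, A.Sat M w g) → ∃ B ∈ Δ, B.Sat M w g

/-- The sequent calculus G(FOC+J). -/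
inductive Der : List Fm → List Fm → Prop
| id (A : Fm) : Der [A] [A]
| botL : Der [.bot] []
| perm {Γ Γ' Δ Δ'} : Γ.Perm Γ' → Δ.Perm Δ' → Der Γ Δ → Der Γ' Δ'
| wL {Γ Δ} (A) : Der Γ Δ → Der (A :: Γ) Δ
| wR {Γ Δ} (A) : Der Γ Δ → Der Γ (A :: Δ)
| cL {Γ Δ A} : Der (A :: A :: Γ) Δ → Der (A :: Γ) Δ
| cR {Γ Δ A} : Der Γ (A :: A :: Δ) → Der Γ (A :: Δ)
| cut {Γ Δ P S A} : Der Γ (A :: Δ) → Der (A :: P) S → Der (Γ ++ P) (Δ ++ S)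
| impIR {Θ A B} : (∀ C ∈ Θ, Fm.Persistent C) →
    Der (A :: Θ) [B] → Der Θ [.impI A B]
| impIL {Γ₁ Γ₂ Δ₁ Δ₂ A B} : Der Γ₁ (A :: Δ₁) → Der (B :: Γ₂) Δ₂ →
    Der (.impI A B :: (Γ₁ ++ Γ₂)) (Δ₁ ++ Δ₂)
| impCR {Γ Δ A B} : Der (A :: Γ) (B :: Δ) → Der Γ (.impC A B :: Δ)
| impCL {Γ₁ Γ₂ Δ₁ Δ₂ A B} : Der Γ₁ (A :: Δ₁) → Der (B :: Γ₂) Δ₂ →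
    Der (.impC A B :: (Γ₁ ++ Γ₂)) (Δ₁ ++ Δ₂)
| andR {Γ Δ A B} : Der Γ (A :: Δ) → Der Γ (B :: Δ) → Der Γ (.and A B :: Δ)
| andL1 {Γ Δ A B} : Der (A :: Γ) Δ → Der (.and A B :: Γ) Δ
| andL2 {Γ Δ A B} : Der (B :: Γ) Δ → Der (.and A B :: Γ) Δ
| orR1 {Γ Δ A B} : Der Γ (A :: Δ) → Der Γ (.or A B :: Δ)
| orR2 {Γ Δ A B} : Der Γ (B :: Δ) → Der Γ (.or A B :: Δ)
| orL {Γ Δ A B} : Der (A :: Γ) Δ → Der (B :: Γ) Δ → Der (.or A B :: Γ) Δ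
| allIR {Θ x z A} : (∀ C ∈ Θ, Fm.Persistent C) →
    (∀ C ∈ Θ, z ∉ Fm.fv C) → z ∉ Fm.fv (.allI x A) → z ∉ Fm.bv A →
    Der Θ [A.subst x (.var z)] → Der Θ [.allI x A]
| allIL {Γ Δ x A} (t : Tm) : (∀ y ∈ t.fv, y ∉ Fm.bv A) →
    Der (A.subst x t :: Γ) Δ → Der (.allI x A :: Γ) Δ
| allCR {Γ Δ x z A} : (∀ C ∈ Γ, z ∉ Fm.fv C) → (∀ C ∈ Δ, z ∉ Fm.fv C) →
    z ∉ Fm.fv (.allC x A) → z ∉ Fm.bv A →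
    Der Γ (A.subst x (.var z) :: Δ) → Der Γ (.allC x A :: Δ)
| allCL {Γ Δ x A} (t : Tm) : (∀ y ∈ t.fv, y ∉ Fm.bv A) →
    Der (A.subst x t :: Γ) Δ → Der (.allC x A :: Γ) Δ
| exR {Γ Δ x A} (t : Tm) : (∀ y ∈ t.fv, y ∉ Fm.bv A) →
    Der Γ (A.subst x t :: Δ) → Der Γ (.ex x A :: Δ)
| exL {Γ Δ x z A} : (∀ C ∈ Γ, z ∉ Fm.fv C) → (∀ C ∈ Δ, z ∉ Fm.fv C) →
    z ∉ Fm.fv (.ex x A) → z ∉ Fm.bv A →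
    Der (A.subst x (.var z) :: Γ) Δ → Der (.ex x A :: Γ) Δ

/-! By induction on the total size of `Γ`. If `Γ` is persistent, the restricted rule applies
directly. Otherwise `Γ` contains a formula that is `⊥`, a conjunction, a disjunction or an
existential (`IsJ` rules out `→c` and `∀c`). Each of these is invertible on the left, by a cut
against the matching right rule, so `A, Γ ⇒ B` yields the same sequent with that formula replaced
by its smaller components; the induction hypothesis then gives `→ᵢ` over the components, and the
left rule for the formula (with a fresh eigenvariable for `∃`) puts it back. -/

def Fm.size : Fm → ℕ
| .atom _ _ => 0
| .bot => 0
| .and A B => A.size + B.size + 1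
| .or A B => A.size + B.size + 1
| .impI A B => A.size + B.size + 1
| .impC A B => A.size + B.size + 1
| .allI _ A => A.size + 1
| .allC _ A => A.size + 1
| .ex _ A => A.size + 1

theorem Fm.size_subst (A : Fm) (x : ℕ) (u : Tm) : (A.subst x u).size = A.size := by
  induction A <;> simp [Fm.subst, Fm.size, *] <;> split <;> simp [*]

theorem Fm.IsJ.subst {A : Fm} (h : A.IsJ) (x : ℕ) (u : Tm) : (A.subst x u).IsJ := by
  induction A <;> simp_all [Fm.subst, Fm.IsJ] <;> split <;> simp_all

theorem Tm.fv_finite (t : Tm) : t.fv.Finite := by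
  cases t <;> simp [Tm.fv]

theorem Fm.fv_finite (A : Fm) : A.fv.Finite := by
  induction A with
  | atom P ts =>
    have : {x | ∃ t ∈ ts, x ∈ t.fv} = ⋃ t ∈ {t | t ∈ ts}, t.fv := by ext; simp
    simpa only [Fm.fv, this] using ts.finite_toSet.biUnion fun t _ => t.fv_finite
  | _ => simp_all [Fm.fv]

theorem Fm.bv_finite (A : Fm) : A.bv.Finite := by
  induction A <;> simp_all [Fm.bv]

theorem Fm.exists_fresh (L : List Fm) : ∃ z, ∀ C ∈ L, z ∉ C.fv ∧ z ∉ C.bv := by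
  obtain ⟨z, hz⟩ := (Set.Finite.biUnion (t := fun C => C.fv ∪ C.bv) L.finite_toSet
    fun C _ => C.fv_finite.union C.bv_finite).exists_notMem
  exact ⟨z, fun C hC => not_or.1 fun hzC => hz (Set.mem_biUnion hC hzC)⟩

namespace Der

variable {Γ Γ' Δ : List Fm}

theorem perm_left (hΓ : Γ.Perm Γ') (h : Der Γ Δ) : Der Γ' Δ :=
  h.perm hΓ (List.Perm.refl Δ)

theorem swap_left {C D : Fm} (h : Der (C :: D :: Γ) Δ) : Der (D :: C :: Γ) Δ :=
  h.perm_left (List.Perm.swap D C Γ)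

theorem wL_append (Ξ : List Fm) (h : Der Γ Δ) : Der (Ξ ++ Γ) Δ := by
  induction Ξ with
  | nil => exact h
  | cons C Ξ ih => exact ih.wL C

theorem wR_append (Ξ : List Fm) (h : Der Γ Δ) : Der Γ (Ξ ++ Δ) := by
  induction Ξ with
  | nil => exact h
  | cons C Ξ ih => exact ih.wR C

theorem cut_left {Ξ : List Fm} {C : Fm} (hC : Der Ξ [C]) (h : Der (C :: Γ) Δ) :
    Der (Ξ ++ Γ) Δ :=
  cut hC h

theorem bot_left : Der (.bot :: Γ) Δ := by
  have h : Der (Γ ++ [.bot]) (Δ ++ []) := wL_append Γ (wR_append Δ botL)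
  simpa using h.perm_left (List.perm_append_singleton _ _)

theorem andL_inv {D E : Fm} (h : Der (.and D E :: Γ) Δ) : Der (D :: E :: Γ) Δ := by
  have hD : Der [D, E] [D] := ((id D).wL E).swap_left
  have hE : Der [D, E] [E] := (id E).wL D
  exact cut_left (andR hD hE) h

theorem orL_inv_left {D E : Fm} (h : Der (.or D E :: Γ) Δ) : Der (D :: Γ) Δ :=
  cut_left (orR1 (id D)) h

theorem orL_inv_right {D E : Fm} (h : Der (.or D E :: Γ) Δ) : Der (E :: Γ) Δ :=
  cut_left (orR2 (id E)) h

theorem exL_inv {x z : ℕ} {D : Fm} (hz : z ∉ D.bv) (h : Der (.ex x D :: Γ) Δ) :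
    Der (D.subst x (.var z) :: Γ) Δ :=
  cut_left (exR (.var z) (by simpa [Tm.fv]) (id _)) h

theorem andL {D E : Fm} (h : Der (D :: E :: Γ) Δ) : Der (.and D E :: Γ) Δ :=
  cL (andL1 (andL2 h.swap_left).swap_left)

theorem impIR_cons_of_not_persistent {A B C : Fm} {Γ : List Fm}
    (hJ : ∀ D ∈ C :: Γ, D.IsJ) (hC : ¬C.Persistent)
    (IH : ∀ Γ' : List Fm, (Γ'.map Fm.size).sum < ((C :: Γ).map Fm.size).sum →
      (∀ D ∈ Γ', D.IsJ) → Der (A :: Γ') [B] → Der Γ' [.impI A B])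
    (h : Der (C :: A :: Γ) [B]) : Der (C :: Γ) [.impI A B] := by
  cases C with
  | atom | impI | allI => exact absurd trivial hC
  | impC | allC => simp [Fm.IsJ] at hJ
  | bot => exact bot_left
  | and D E =>
    refine andL (IH (D :: E :: Γ) (by simp [Fm.size]; omega) (by simp_all [Fm.IsJ]) ?_)
    exact h.andL_inv.perm_left (List.perm_middle (l₁ := [D, E]))
  | or D E =>
    refine orL (IH (D :: Γ) (by simp [Fm.size]) (by simp_all [Fm.IsJ]) ?_)
      (IH (E :: Γ) (by simp [Fm.size]) (by simp_all [Fm.IsJ]) ?_)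
    · exact h.orL_inv_left.swap_left
    · exact h.orL_inv_right.swap_left
  | ex x D =>
    obtain ⟨z, hz⟩ := Fm.exists_fresh (.impI A B :: .ex x D :: Γ)
    have hzD : z ∉ D.bv := fun hzD => (hz (.ex x D) (by simp)).2 (Set.mem_insert_of_mem x hzD)
    refine exL (fun C hC => (hz C (by simp [hC])).1) (by simpa using (hz _ (by simp)).1)
      (hz _ (by simp)).1 hzD ?_
    refine IH _ (by simp [Fm.size, Fm.size_subst]) ?_ (h.exL_inv hzD).swap_left
    simp_all [Fm.IsJ, Fm.IsJ.subst]

end Der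

/-- the unrestricted right rule for →ᵢ is admissible when the
context consists only of purely intuitionistic formulas. -/
theorem impIR_unrestricted_admissible (Γ : List Fm) (A B : Fm)
    (hΓ : ∀ C ∈ Γ, Fm.IsJ C)
    (h : Der (A :: Γ) [B]) : Der Γ [.impI A B] := by
  induction hn : (Γ.map Fm.size).sum using Nat.strong_induction_on generalizing Γ with
  | _ n IH =>
  by_cases hp : ∀ C ∈ Γ, C.Persistent
  · exact Der.impIR hp h
  push Not at hp
  obtain ⟨C, hCΓ, hC⟩ := hp
  have hperm : Γ.Perm (C :: Γ.erase C) := List.perm_cons_erase hCΓ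
  refine (Der.impIR_cons_of_not_persistent (fun D hD => hΓ D (hperm.mem_iff.2 hD)) hC
    (fun Γ' hlt hJ' h' => IH _ ?_ Γ' hJ' h' rfl) ?_).perm_left hperm.symm
  · rwa [← hn, (hperm.map Fm.size).sum_eq]
  · exact h.perm_left ((hperm.cons A).trans (List.Perm.swap C A _))
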